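/- arXiv:2011.14460 — 3 statements merged into one kernel-verified Lean document; each statement's English description precedes it below -/
import Mathlib

section
/- Let T be a sequence of length n over 𝔸, let I be a nonempty finite itemset, and let 1 ≤ x ≤ n. Then co(T,I,x) equals the number of indices i ∈ {x−1,…,n−1} such that max_{e∈I} tesla(T,e,i) < x (the maximum taken in ℕ∞). -/
/-- `tesla T e i` : the time elapsed since the last access of item `e` at index `i`,
i.e. `i - j` where `j` is the greatest index `j ≤ i` with `T j = e`, and `∞` if there
is no such index. -/
noncomputable def tesla {𝔸 : Type*} {n : ℕ} (T : Fin n → 𝔸) (e : 𝔸) (i : ℕ) : ℕ∞ :=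
  sInf {d : ℕ∞ | ∃ j : Fin n, (j : ℕ) ≤ i ∧ T j = e ∧ d = ((i - (j : ℕ) : ℕ) : ℕ∞)}

/-- `I` co-occurs in the window `ω(i,x) = {i-x+1, …, i}` of `T`. -/
def coOccursIn {𝔸 : Type*} {n : ℕ} (T : Fin n → 𝔸) (I : Finset 𝔸) (i x : ℕ) : Prop :=
  ∀ e ∈ I, ∃ j : Fin n, i + 1 - x ≤ (j : ℕ) ∧ (j : ℕ) ≤ i ∧ T j = e

/-- `co(T,I,x)` : the number of indices `i ∈ {x-1, …, n-1}` such that `I` co-occurs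
in the window `ω(i,x)`. -/
noncomputable def coCount {𝔸 : Type*} {n : ℕ} (T : Fin n → 𝔸) (I : Finset 𝔸) (x : ℕ) : ℕ :=
  {i : ℕ | x - 1 ≤ i ∧ i ≤ n - 1 ∧ coOccursIn T I i x}.ncard

lemma tesla_lt_iff {𝔸 : Type*} {n : ℕ} (T : Fin n → 𝔸) (e : 𝔸) (i x : ℕ) :
    tesla T e i < (x : ℕ∞) ↔ ∃ j : Fin n, (j : ℕ) ≤ i ∧ T j = e ∧ i - (j : ℕ) < x := by
  rw [tesla, sInf_lt_iff]
  constructor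
  · rintro ⟨d, ⟨j, hj, hTj, rfl⟩, hd⟩
    exact ⟨j, hj, hTj, by exact_mod_cast hd⟩
  · rintro ⟨j, hj, hTj, hd⟩
    exact ⟨_, ⟨j, hj, hTj, rfl⟩, by exact_mod_cast hd⟩

lemma coOccursIn_iff_forall_tesla_lt {𝔸 : Type*} {n : ℕ} (T : Fin n → 𝔸) (I : Finset 𝔸)
    (i x : ℕ) : coOccursIn T I i x ↔ ∀ e ∈ I, tesla T e i < (x : ℕ∞) := by
  refine forall₂_congr fun e _ => ?_
  rw [tesla_lt_iff]
  constructor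
  · rintro ⟨j, hij, hji, hTj⟩
    exact ⟨j, hji, hTj, by omega⟩
  · rintro ⟨j, hji, hTj, hij⟩
    exact ⟨j, by omega, hji, hTj⟩

lemma coOccursIn_iff_sup_tesla_lt {𝔸 : Type*} {n : ℕ} (T : Fin n → 𝔸) (I : Finset 𝔸)
    (i : ℕ) {x : ℕ} (hx : 1 ≤ x) :
    coOccursIn T I i x ↔ I.sup (fun e => tesla T e i) < (x : ℕ∞) := by
  have hx_pos : (⊥ : ℕ∞) < x := by simp only [bot_eq_zero, Nat.cast_pos]; omega
  rw [Finset.sup_lt_iff hx_pos, coOccursIn_iff_forall_tesla_lt T I i x]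

theorem coCount_eq_card_sup_tesla_lt_general {𝔸 : Type*} {n : ℕ} (T : Fin n → 𝔸)
    (I : Finset 𝔸) (x : ℕ) (hx : 1 ≤ x) :
    coCount T I x =
      {i : ℕ | x - 1 ≤ i ∧ i ≤ n - 1 ∧ I.sup (fun e => tesla T e i) < (x : ℕ∞)}.ncard := by
  simp only [coCount, coOccursIn_iff_sup_tesla_lt T I _ hx]

/-- `co(T,I,x)` equals the number of indices `i ∈ {x-1, …, n-1}` with
`max_{e ∈ I} tesla(T,e,i) < x`. -/
theorem coCount_eq_card_sup_tesla_lt {𝔸 : Type*} {n : ℕ} (T : Fin n → 𝔸)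
    (I : Finset 𝔸) (hI : I.Nonempty) (x : ℕ) (hx : 1 ≤ x) (hxn : x ≤ n) :
    coCount T I x =
      {i : ℕ | x - 1 ≤ i ∧ i ≤ n - 1 ∧ I.sup (fun e => tesla T e i) < (x : ℕ∞)}.ncard :=
  coCount_eq_card_sup_tesla_lt_general T I x hx
end

section
/- Let T be a sequence of length n over 𝔸, let I be a nonempty finite itemset, and let 1 ≤ x ≤ n. Then co(T,I,x) = (n − x + 1) − Σ_{k=x}^{n} (k − x + 1) · H[k], where H is the gap histogram of T with respect to I. -/
/-- The interval `{a, …, b} ⊆ {0, …, n-1}` is an `A`-gap of `T` :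
none of its entries lies in `A`. -/
def IsGap {𝔸 : Type*} {n : ℕ} (T : Fin n → 𝔸) (A : Finset 𝔸) (a b : ℕ) : Prop :=
  a ≤ b ∧ b < n ∧ ∀ j : Fin n, a ≤ (j : ℕ) → (j : ℕ) ≤ b → T j ∉ A

/-- A maximal `A`-gap : an `A`-gap not properly contained in any other `A`-gap. -/
def IsMaxGap {𝔸 : Type*} {n : ℕ} (T : Fin n → 𝔸) (A : Finset 𝔸) (a b : ℕ) : Prop :=
  IsGap T A a b ∧ ∀ a' b', IsGap T A a' b' → a' ≤ a → b ≤ b' → a' = a ∧ b' = b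

/-- `N_A(k)` : the number of maximal `A`-gaps of length `k`. -/
noncomputable def gapCount {𝔸 : Type*} {n : ℕ} (T : Fin n → 𝔸) (A : Finset 𝔸) (k : ℕ) : ℕ :=
  {p : ℕ × ℕ | IsMaxGap T A p.1 p.2 ∧ p.2 - p.1 + 1 = k}.ncard

/-- The gap histogram `H[k] = Σ_{∅ ≠ A ⊆ I} (-1)^(|A|+1) N_A(k)`. -/
noncomputable def gapHistogram {𝔸 : Type*} [DecidableEq 𝔸] {n : ℕ} (T : Fin n → 𝔸)
    (I : Finset 𝔸) (k : ℕ) : ℤ :=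
  ∑ A ∈ I.powerset.filter (fun A => A.Nonempty),
    (-1 : ℤ) ^ (A.card + 1) * (gapCount T A k : ℤ)

/-! A window misses some letter of `I` iff it is an `{e}`-gap for some `e ∈ I`, so
inclusion–exclusion over the nonempty `A ⊆ I` counts these windows by the signed numbers of
windows that are `A`-gaps. Every window that is an `A`-gap lies in exactly one maximal `A`-gap,
and a maximal gap of length `k ≥ x` contains exactly `k - x + 1` windows of length `x`. -/

open Finset

section Gaps

variable {𝔸 : Type*} {n : ℕ} {T : Fin n → 𝔸} {A : Finset 𝔸}

theorem IsGap.mono {a b a' b' : ℕ} (h : IsGap T A a b) (ha : a ≤ a') (hab : a' ≤ b')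
    (hb : b' ≤ b) : IsGap T A a' b' :=
  ⟨hab, hb.trans_lt h.2.1, fun j hj hj' => h.2.2 j (ha.trans hj) (hj'.trans hb)⟩

theorem IsGap.exists_isMaxGap {a b : ℕ} (h : IsGap T A a b) :
    ∃ a' b', IsMaxGap T A a' b' ∧ a' ≤ a ∧ b ≤ b' := by
  classical
  let S := (range n ×ˢ range n).filter fun p => IsGap T A p.1 p.2 ∧ p.1 ≤ a ∧ b ≤ p.2
  have mem_S {p : ℕ × ℕ} : p ∈ S ↔ IsGap T A p.1 p.2 ∧ p.1 ≤ a ∧ b ≤ p.2 := by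
    simp only [S, mem_filter, mem_product, mem_range, and_iff_right_iff_imp]
    exact fun hp => ⟨hp.1.1.trans_lt hp.1.2.1, hp.1.2.1⟩
  -- a longest gap containing `{a, …, b}` is maximal
  obtain ⟨p, hpS, hp⟩ :=
    S.exists_max_image (fun p => p.2 - p.1) ⟨(a, b), mem_S.2 ⟨h, le_rfl, le_rfl⟩⟩
  obtain ⟨hgap, hpa, hbp⟩ := mem_S.1 hpS
  refine ⟨p.1, p.2, ⟨hgap, fun a' b' h' ha' hb' => ?_⟩, hpa, hbp⟩
  have := hp (a', b') (mem_S.2 ⟨h', ha'.trans hpa, hbp.trans hb'⟩)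
  have := hgap.1
  omega

theorem IsMaxGap.eq_of_mem {a b a' b' j : ℕ} (h : IsMaxGap T A a b) (h' : IsMaxGap T A a' b')
    (hj : j ∈ Icc a b) (hj' : j ∈ Icc a' b') : a = a' ∧ b = b' := by
  rw [mem_Icc] at hj hj'
  have hunion : IsGap T A (min a a') (max b b') := by
    refine ⟨by omega, max_lt h.1.2.1 h'.1.2.1, fun i hi hi' => ?_⟩
    by_cases hib : (i : ℕ) ≤ b ∧ a ≤ i
    · exact h.1.2.2 i hib.2 hib.1
    · exact h'.1.2.2 i (by omega) (by omega)
  have := h.2 _ _ hunion (min_le_left _ _) (le_max_left _ _)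
  have := h'.2 _ _ hunion (min_le_right _ _) (le_max_right _ _)
  omega

theorem isGap_iff_forall_singleton (hA : A.Nonempty) {a b : ℕ} :
    IsGap T A a b ↔ ∀ e ∈ A, IsGap T {e} a b := by
  obtain ⟨e₀, he₀⟩ := hA
  refine ⟨fun h e he => ⟨h.1, h.2.1, fun j hj hj' hje => ?_⟩,
    fun h => ⟨(h e₀ he₀).1, (h e₀ he₀).2.1, fun j hj hj' hjA => ?_⟩⟩
  · exact h.2.2 j hj hj' (mem_singleton.1 hje ▸ he)
  · exact (h _ hjA).2.2 j hj hj' (mem_singleton_self _)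

open Classical in
noncomputable def maxGaps (T : Fin n → 𝔸) (A : Finset 𝔸) : Finset (ℕ × ℕ) :=
  (range n ×ˢ range n).filter fun p => IsMaxGap T A p.1 p.2

theorem mem_maxGaps {p : ℕ × ℕ} : p ∈ maxGaps T A ↔ IsMaxGap T A p.1 p.2 := by
  simp only [maxGaps, mem_filter, mem_product, mem_range, and_iff_right_iff_imp]
  exact fun hp => ⟨hp.1.1.trans_lt hp.1.2.1, hp.1.2.1⟩

theorem gapCount_eq_card_filter_maxGaps (k : ℕ) :
    gapCount T A k = #{p ∈ maxGaps T A | p.2 - p.1 + 1 = k} := by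
  rw [gapCount, ← Set.ncard_coe_finset]
  congr 1
  ext p
  simp only [coe_filter, mem_maxGaps, Set.mem_ofPred_eq]

theorem sum_maxGaps_eq_sum_gapCount {M : Type*} [AddCommMonoid M] (f : ℕ → M) :
    ∑ p ∈ maxGaps T A, f (p.2 - p.1 + 1) = ∑ k ∈ range (n + 1), gapCount T A k • f k := by
  rw [← sum_fiberwise_of_maps_to (g := fun p => p.2 - p.1 + 1) (t := range (n + 1))]
  · refine sum_congr rfl fun k _ => ?_
    rw [gapCount_eq_card_filter_maxGaps, ← sum_const]
    exact sum_congr rfl fun p hp => by rw [(mem_filter.1 hp).2]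
  · intro p hp
    have := (mem_maxGaps.1 hp).1.2.1
    rw [mem_range]
    omega

open Classical in
/-- The windows `ω(i, x)` that are `A`-gaps, indexed by their right end `i`. -/
noncomputable def gapWindows (T : Fin n → 𝔸) (A : Finset 𝔸) (x : ℕ) : Finset ℕ :=
  (Icc (x - 1) (n - 1)).filter fun i => IsGap T A (i + 1 - x) i

theorem mem_gapWindows {x i : ℕ} :
    i ∈ gapWindows T A x ↔ i ∈ Icc (x - 1) (n - 1) ∧ IsGap T A (i + 1 - x) i := by
  classical
  simp only [gapWindows, mem_filter]

theorem gapWindows_eq_biUnion {x : ℕ} (hx : 1 ≤ x) :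
    gapWindows T A x = (maxGaps T A).biUnion fun p => Icc (p.1 + x - 1) p.2 := by
  ext i
  simp only [mem_gapWindows, mem_biUnion, mem_maxGaps, mem_Icc]
  constructor
  · rintro ⟨hi, hgap⟩
    obtain ⟨a, b, hmax, ha, hb⟩ := hgap.exists_isMaxGap
    exact ⟨(a, b), hmax, by omega, hb⟩
  · rintro ⟨p, hmax, hpi, hip⟩
    have := hmax.1.2.1
    exact ⟨by omega, hmax.1.mono (by omega) (by omega) hip⟩

theorem card_gapWindows {x : ℕ} (hx : 1 ≤ x) :
    #(gapWindows T A x) = ∑ k ∈ Icc x n, (k + 1 - x) * gapCount T A k := by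
  have hdisj : (maxGaps T A : Set (ℕ × ℕ)).PairwiseDisjoint fun p => Icc (p.1 + x - 1) p.2 := by
    intro p hp q hq hpq
    refine disjoint_left.2 fun i hip hiq => hpq (Prod.ext_iff.2 ?_)
    rw [mem_Icc] at hip hiq
    exact (mem_maxGaps.1 hp).eq_of_mem (mem_maxGaps.1 hq) (j := i)
      (mem_Icc.2 ⟨by omega, hip.2⟩) (mem_Icc.2 ⟨by omega, hiq.2⟩)
  calc #(gapWindows T A x)
      = ∑ p ∈ maxGaps T A, ((p.2 - p.1 + 1) + 1 - x) := by
        rw [gapWindows_eq_biUnion hx, card_biUnion hdisj]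
        refine sum_congr rfl fun p hp => ?_
        have := (mem_maxGaps.1 hp).1.1
        rw [Nat.card_Icc]
        omega
    _ = ∑ k ∈ range (n + 1), gapCount T A k • (k + 1 - x) :=
        sum_maxGaps_eq_sum_gapCount fun k => k + 1 - x
    _ = ∑ k ∈ Icc x n, gapCount T A k • (k + 1 - x) := by
        refine (sum_subset (fun k hk => ?_) fun k hkn hk => ?_).symm
        · simp only [mem_Icc, mem_range] at hk ⊢
          omega
        · simp only [mem_Icc, mem_range] at hk hkn
          rw [Nat.sub_eq_zero_of_le (by omega), smul_zero]
    _ = ∑ k ∈ Icc x n, (k + 1 - x) * gapCount T A k :=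
        sum_congr rfl fun k _ => by rw [smul_eq_mul, mul_comm]

end Gaps

section CoOccurrence

variable {𝔸 : Type*} {n : ℕ} {T : Fin n → 𝔸} {I : Finset 𝔸} {x : ℕ}

theorem inf'_gapWindows_singleton {A : Finset 𝔸} (hA : A.Nonempty) :
    A.inf' hA (fun e => gapWindows T {e} x) = gapWindows T A x := by
  ext i
  rw [mem_inf']
  simp only [mem_gapWindows, isGap_iff_forall_singleton hA]
  obtain ⟨e₀, he₀⟩ := hA
  exact ⟨fun h => ⟨(h e₀ he₀).1, fun e he => (h e he).2⟩, fun h e he => ⟨h.1, h.2 e he⟩⟩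

theorem not_coOccursIn_iff {i : ℕ} (hx : 1 ≤ x) (hi : i < n) :
    ¬ coOccursIn T I i x ↔ ∃ e ∈ I, IsGap T {e} (i + 1 - x) i := by
  simp only [coOccursIn, IsGap, mem_singleton, not_forall, not_exists, not_and, exists_prop]
  exact exists_congr fun e => and_congr_right fun _ =>
    ⟨fun h => ⟨by omega, hi, h⟩, fun h => h.2.2⟩

theorem coCount_add_card_biUnion_gapWindows (hx : 1 ≤ x) (hxn : x ≤ n) :
    coCount T I x + #(I.biUnion fun e => gapWindows T {e} x) = n + 1 - x := by
  classical
  have hco : coCount T I x = #{i ∈ Icc (x - 1) (n - 1) | coOccursIn T I i x} := by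
    rw [coCount, ← Set.ncard_coe_finset]
    congr 1
    ext i
    simp only [coe_filter, mem_Icc, Set.mem_ofPred_eq, and_assoc]
  have hmissing : I.biUnion (fun e => gapWindows T {e} x) =
      {i ∈ Icc (x - 1) (n - 1) | ¬ coOccursIn T I i x} := by
    ext i
    simp only [mem_biUnion, mem_gapWindows, mem_filter]
    refine ⟨fun ⟨e, he, hi, hgap⟩ => ⟨hi, ?_⟩, fun ⟨hi, hnot⟩ => ?_⟩
    · exact (not_coOccursIn_iff hx hgap.2.1).2 ⟨e, he, hgap⟩
    · have hin : i < n := by rw [mem_Icc] at hi; omega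
      obtain ⟨e, he, hgap⟩ := (not_coOccursIn_iff hx hin).1 hnot
      exact ⟨e, he, hi, hgap⟩
  rw [hco, hmissing, card_filter_add_card_filter_not, Nat.card_Icc]
  omega

theorem card_biUnion_gapWindows_singleton [DecidableEq 𝔸] (hx : 1 ≤ x) :
    (#(I.biUnion fun e => gapWindows T {e} x) : ℤ) =
      ∑ k ∈ Icc x n, ((k : ℤ) - x + 1) * gapHistogram T I k := by
  calc (#(I.biUnion fun e => gapWindows T {e} x) : ℤ)
      = ∑ A ∈ I.powerset.filter (·.Nonempty), (-1 : ℤ) ^ (#A + 1) * #(gapWindows T A x) := by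
        rw [inclusion_exclusion_card_biUnion, ← sum_coe_sort (I.powerset.filter (·.Nonempty))]
        exact sum_congr rfl fun A _ => by rw [inf'_gapWindows_singleton]
    _ = ∑ A ∈ I.powerset.filter (·.Nonempty), (-1 : ℤ) ^ (#A + 1) *
          ∑ k ∈ Icc x n, ((k : ℤ) - x + 1) * gapCount T A k := by
        refine sum_congr rfl fun A _ => ?_
        rw [card_gapWindows hx, Nat.cast_sum]
        refine congrArg _ (sum_congr rfl fun k hk => ?_)
        rw [mem_Icc] at hk
        rw [Nat.cast_mul, Nat.cast_sub (by omega : x ≤ k + 1)]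
        push_cast
        ring
    _ = ∑ k ∈ Icc x n, ((k : ℤ) - x + 1) * gapHistogram T I k := by
        simp only [gapHistogram, mul_sum]
        rw [sum_comm]
        exact sum_congr rfl fun k _ => sum_congr rfl fun A _ => by ring

end CoOccurrence

theorem coCount_eq_sub_histogram_general {𝔸 : Type*} [DecidableEq 𝔸] {n : ℕ}
    (T : Fin n → 𝔸) (I : Finset 𝔸) (x : ℕ) (hx : 1 ≤ x) (hxn : x ≤ n) :
    (coCount T I x : ℤ) =
      ((n : ℤ) - x + 1) -
        ∑ k ∈ Finset.Icc x n, ((k : ℤ) - x + 1) * gapHistogram T I k := by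
  have hcount := coCount_add_card_biUnion_gapWindows (T := T) (I := I) hx hxn
  rw [← card_biUnion_gapWindows_singleton hx]
  omega

/-- `co(T,I,x) = (n - x + 1) - Σ_{k=x}^{n} (k - x + 1) · H[k]`. -/
theorem coCount_eq_sub_histogram {𝔸 : Type*} [DecidableEq 𝔸] {n : ℕ}
    (T : Fin n → 𝔸) (I : Finset 𝔸) (hI : I.Nonempty) (x : ℕ) (hx : 1 ≤ x) (hxn : x ≤ n) :
    (coCount T I x : ℤ) =
      ((n : ℤ) - x + 1) -
        ∑ k ∈ Finset.Icc x n, ((k : ℤ) - x + 1) * gapHistogram T I k :=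
  coCount_eq_sub_histogram_general T I x hx hxn
end

section
/- Let I be a finite set, let f : I → ℕ be injective, and let X be a nonempty subset of I such that there exists e₀ ∈ I∖X with f(e₀) > f(a) for every a ∈ X (the item of I seen furthest in the past does not lie in X). Then for every k ∈ ℕ, Σ_{A ⊆ I, A ∩ X ≠ ∅, min_A f = k} (−1)^{|A|+1} = 0. (This is the 'no update' case of Theorem 6 of the paper.) -/
/-- `min_A f` : the minimum of `f` over the (nonempty) finite set `A`. -/
noncomputable def finsetMinOn {α : Type*} (f : α → ℕ) (A : Finset α) : ℕ :=
  sInf (f '' ↑A)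

/-!
Toggling the item `e₀` (seen further in the past than every item of `X`) is a
sign-reversing involution on the subsets being counted: a subset `A` meeting `X`
contains some `a ∈ X` with `f a < f e₀`, so adding or removing `e₀` changes
neither `min_A f` nor whether `A` meets `X`, while it changes `|A|` by one.
-/

namespace Finset

variable {α : Type*} [DecidableEq α]

theorem sum_neg_one_pow_card_eq_zero_of_toggle {R : Type*} [Ring R] {s : Finset (Finset α)}
    (e : α) (insert_mem : ∀ A ∈ s, e ∉ A → insert e A ∈ s)
    (erase_mem : ∀ A ∈ s, e ∈ A → A.erase e ∈ s) :
    ∑ A ∈ s, (-1 : R) ^ A.card = 0 := by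
  refine sum_involution (fun A _ => if e ∈ A then A.erase e else insert e A)
    (fun A _ => ?_) (fun A _ _ => ?_) (fun A hA => ?_) (fun A _ => ?_)
  · by_cases h : e ∈ A
    · rw [if_pos h, ← card_erase_add_one h, pow_succ]
      simp
    · simp [h, card_insert_of_notMem h, pow_succ]
  · by_cases h : e ∈ A <;> simp [h]
  · by_cases h : e ∈ A
    · simpa [h] using erase_mem A hA h
    · simpa [h] using insert_mem A hA h
  · by_cases h : e ∈ A <;> simp [h]

end Finset

theorem finsetMinOn_eq_inf' {α : Type*} (f : α → ℕ) {A : Finset α} (hA : A.Nonempty) :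
    finsetMinOn f A = A.inf' hA f :=
  (Finset.inf'_eq_csInf_image A hA f).symm

theorem finsetMinOn_insert_of_lt {α : Type*} [DecidableEq α] (f : α → ℕ) {A : Finset α}
    {a e : α} (ha : a ∈ A) (hlt : f a < f e) :
    finsetMinOn f (insert e A) = finsetMinOn f A := by
  have hA : A.Nonempty := ⟨a, ha⟩
  rw [finsetMinOn_eq_inf' f hA, finsetMinOn_eq_inf' f (Finset.insert_nonempty e A),
    Finset.inf'_insert (H := hA)]
  have := Finset.inf'_le f ha
  omega

theorem signed_count_multi_zero_general {α : Type*} [DecidableEq α]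
    (I : Finset α) (f : α → ℕ)
    (X : Finset α)
    (hsep : ∃ e₀ ∈ I \ X, ∀ a ∈ X, f a < f e₀) (k : ℕ) :
    ∑ A ∈ I.powerset.filter (fun A => (A ∩ X).Nonempty ∧ finsetMinOn f A = k),
      (-1 : ℤ) ^ (A.card + 1) = 0 := by
  obtain ⟨e₀, he₀, hlt⟩ := hsep
  obtain ⟨he₀I, he₀X⟩ := Finset.mem_sdiff.mp he₀
  simp_rw [pow_succ, ← Finset.sum_mul]
  rw [Finset.sum_neg_one_pow_card_eq_zero_of_toggle e₀ ?_ ?_, zero_mul] <;>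
    simp only [Finset.mem_filter, Finset.mem_powerset]
  · rintro A ⟨hAI, ⟨a, haAX⟩, rfl⟩ -
    obtain ⟨haA, haX⟩ := Finset.mem_inter.mp haAX
    refine ⟨Finset.insert_subset he₀I hAI, ⟨a, ?_⟩, finsetMinOn_insert_of_lt f haA (hlt a haX)⟩
    exact Finset.mem_inter.mpr ⟨Finset.mem_insert_of_mem haA, haX⟩
  · rintro A ⟨hAI, ⟨a, haAX⟩, rfl⟩ he₀A
    obtain ⟨haA, haX⟩ := Finset.mem_inter.mp haAX
    have haA' : a ∈ A.erase e₀ := Finset.mem_erase.mpr ⟨ne_of_mem_of_not_mem haX he₀X, haA⟩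
    refine ⟨(Finset.erase_subset e₀ A).trans hAI, ⟨a, Finset.mem_inter.mpr ⟨haA', haX⟩⟩, ?_⟩
    conv_rhs => rw [← Finset.insert_erase he₀A]
    exact (finsetMinOn_insert_of_lt f haA' (hlt a haX)).symm

/-- 'No update' case of Theorem 6: if some item `e₀ ∈ I \ X` was seen further in
the past than every item of `X`, then for every `k` the signed count of subsets
`A ⊆ I` meeting `X` with `min_A f = k` vanishes. -/
theorem signed_count_multi_zero {α : Type*} [DecidableEq α]
    (I : Finset α) (f : α → ℕ) (hf : Set.InjOn f ↑I)
    (X : Finset α) (hXne : X.Nonempty) (hX : X ⊆ I)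
    (hsep : ∃ e₀ ∈ I \ X, ∀ a ∈ X, f a < f e₀) (k : ℕ) :
    ∑ A ∈ I.powerset.filter (fun A => (A ∩ X).Nonempty ∧ finsetMinOn f A = k),
      (-1 : ℤ) ^ (A.card + 1) = 0 :=
  signed_count_multi_zero_general I f X hsep k
end
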